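/- For d ∈ ℕ and matrices A ∈ ℝ^{d×n}, B ∈ ℝ^{n×l}, each entry of the product satisfies (AB)_{ij} = ∑_{k=1}^n (1/4)(σ(A_{ik}+B_{kj}) + σ(-A_{ik}-B_{kj}) - σ(A_{ik}-B_{kj}) - σ(-A_{ik}+B_{kj})), where σ(t) = max(0,t)^2; hence matrix multiplication is exactly computed by a depth-2 ReQU network with at most 4·d·n·l hidden units. -/

import Mathlib

/-- The ReQU activation function, `σ(t) = max(0,t)^2`. -/
noncomputable def requ (t : ℝ) : ℝ := (max 0 t) ^ 2

lemma requ_add_requ_neg (x : ℝ) : requ x + requ (-x) = x ^ 2 := by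
  unfold requ
  rcases le_total x 0 with h | h
  · rw [max_eq_left h, max_eq_right (neg_nonneg.mpr h)]; ring
  · rw [max_eq_right h, max_eq_left (neg_nonpos.mpr h)]; ring

/-- Polarization `a b = ((a + b)² - (a - b)²) / 4`, with each square split into two ReQU units. -/
lemma mul_eq_requ_polarization (a b : ℝ) :
    a * b = 1 / 4 * (requ (a + b) + requ (-a - b) - requ (a - b) - requ (-a + b)) := by
  have h_add := requ_add_requ_neg (a + b)
  have h_sub := requ_add_requ_neg (a - b)
  rw [neg_add'] at h_add
  rw [show -(a - b) = -a + b by ring] at h_sub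
  linear_combination (-1 / 4 : ℝ) * h_add + (1 / 4 : ℝ) * h_sub

theorem matrix_mul_entry_requ (d n l : ℕ) (A : Matrix (Fin d) (Fin n) ℝ)
    (B : Matrix (Fin n) (Fin l) ℝ) (i : Fin d) (j : Fin l) :
    (A * B) i j =
      ∑ k : Fin n, (1 / 4) *
        (requ (A i k + B k j) + requ (-A i k - B k j)
          - requ (A i k - B k j) - requ (-A i k + B k j)) := by
  rw [Matrix.mul_apply]
  exact Finset.sum_congr rfl fun k _ => mul_eq_requ_polarization (A i k) (B k j)
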